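/- If a 3-qubit state a satisfies q(a) = 0 but the Fréchet derivative of q at a is nonzero (FTS rank 3, i.e. T(a,a,a) ≠ 0), then a is SLOCC-equivalent to the W-class representative |111⟩ + |001⟩ + |010⟩, i.e. to the state b with b₁₁₁ = b₀₀₁ = b₀₁₀ = 1 and all other components zero. -/

import Mathlib

/-- A 3-qubit state: a map `Fin 2 → Fin 2 → Fin 2 → ℂ` with components `a i j k`. -/
abbrev QState3 : Type := Fin 2 → Fin 2 → Fin 2 → ℂ

/-- The action of the SLOCC-equivalence group `SL(2,ℂ)×SL(2,ℂ)×SL(2,ℂ)` on 3-qubit states: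
`((g₁,g₂,g₃)·a)_{ijk} = Σ (g₁)_{ii'} (g₂)_{jj'} (g₃)_{kk'} a_{i'j'k'}`. -/
noncomputable def sloccAct (g₁ g₂ g₃ : Matrix.SpecialLinearGroup (Fin 2) ℂ) (a : QState3) : QState3 :=
  fun i j k => ∑ i' : Fin 2, ∑ j' : Fin 2, ∑ k' : Fin 2,
    (g₁ : Matrix (Fin 2) (Fin 2) ℂ) i i' * (g₂ : Matrix (Fin 2) (Fin 2) ℂ) j j' *
      (g₃ : Matrix (Fin 2) (Fin 2) ℂ) k k' * a i' j' k'

/-- The quartic norm `q` of a 3-qubit state (Cayley's hyperdeterminant up to scale). -/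
def quarticQ3 (a : QState3) : ℂ :=
  -2 * (a 1 1 1 * a 0 0 0 -
      (a 0 0 1 * a 1 1 0 + a 0 1 0 * a 1 0 1 + a 1 0 0 * a 0 1 1)) ^ 2 -
    8 * (a 1 1 1 * a 0 0 1 * a 0 1 0 * a 1 0 0 + a 0 0 0 * a 1 1 0 * a 1 0 1 * a 0 1 1 -
      (a 0 1 0 * a 1 0 0 * a 1 0 1 * a 0 1 1 + a 0 0 1 * a 1 0 0 * a 1 1 0 * a 0 1 1 +
        a 0 0 1 * a 0 1 0 * a 1 1 0 * a 1 0 1))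

/-- The symplectic (antisymmetric bilinear) form of two 3-qubit states. -/
def symplQ3 (a b : QState3) : ℂ :=
  a 1 1 1 * b 0 0 0 - a 0 0 0 * b 1 1 1 +
    (a 0 0 1 * b 1 1 0 + a 0 1 0 * b 1 0 1 + a 1 0 0 * b 0 1 1) -
    (a 1 1 0 * b 0 0 1 + a 1 0 1 * b 0 1 0 + a 0 1 1 * b 1 0 0)

abbrev SL2C := Matrix.SpecialLinearGroup (Fin 2) ℂ

noncomputable def mkSL (m : Matrix (Fin 2) (Fin 2) ℂ) (h : m.det = 1) : SL2C := ⟨m, h⟩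

@[simp] lemma mkSL_coe (m : Matrix (Fin 2) (Fin 2) ℂ) (h : m.det = 1) :
    ((mkSL m h : SL2C) : Matrix (Fin 2) (Fin 2) ℂ) = m := rfl

lemma sl2_entries (g : SL2C) :
    ∃ p q r s : ℂ, (g : Matrix (Fin 2) (Fin 2) ℂ) = !![p, q; r, s] ∧ p * s - q * r = 1 := by
  refine ⟨(g : Matrix (Fin 2) (Fin 2) ℂ) 0 0, (g : Matrix (Fin 2) (Fin 2) ℂ) 0 1,
    (g : Matrix (Fin 2) (Fin 2) ℂ) 1 0, (g : Matrix (Fin 2) (Fin 2) ℂ) 1 1,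
    Matrix.etaExpand_eq (g : Matrix (Fin 2) (Fin 2) ℂ) |>.symm, ?_⟩
  have h := g.2
  rw [Matrix.det_fin_two] at h
  exact h

lemma sloccAct_comp (g₁ g₂ g₃ h₁ h₂ h₃ : SL2C) (a : QState3) :
    sloccAct g₁ g₂ g₃ (sloccAct h₁ h₂ h₃ a) = sloccAct (g₁*h₁) (g₂*h₂) (g₃*h₃) a := by
  funext i j k
  simp [sloccAct, Fin.sum_univ_two, Matrix.mul_apply]
  ring

lemma sloccAct_one (a : QState3) : sloccAct 1 1 1 a = a := by
  funext i j k
  fin_cases i <;> fin_cases j <;> fin_cases k <;>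
    simp [sloccAct, Fin.sum_univ_two, Matrix.one_apply]

lemma sloccAct_zero (g₁ g₂ g₃ : SL2C) : sloccAct g₁ g₂ g₃ (0 : QState3) = 0 := by
  funext i j k
  simp [sloccAct]

lemma sloccAct_eq_zero {g₁ g₂ g₃ : SL2C} {a : QState3}
    (h : sloccAct g₁ g₂ g₃ a = 0) : a = 0 := by
  have := congrArg (sloccAct g₁⁻¹ g₂⁻¹ g₃⁻¹) h
  rwa [sloccAct_comp, sloccAct_zero, inv_mul_cancel, inv_mul_cancel, inv_mul_cancel,
    sloccAct_one] at this

def SloccEq (a b : QState3) : Prop := ∃ g₁ g₂ g₃ : SL2C, sloccAct g₁ g₂ g₃ a = b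

lemma SloccEq.refl (a : QState3) : SloccEq a a := ⟨1, 1, 1, sloccAct_one a⟩

lemma SloccEq.trans {a b c : QState3} (h₁ : SloccEq a b) (h₂ : SloccEq b c) : SloccEq a c := by
  obtain ⟨g₁, g₂, g₃, hg⟩ := h₁
  obtain ⟨h₁', h₂', h₃', hh⟩ := h₂
  exact ⟨h₁' * g₁, h₂' * g₂, h₃' * g₃, by rw [← sloccAct_comp, hg, hh]⟩


/-- The gradient (trilinear `T(a,a,a)`, up to normalization) of the quartic form. -/
def Tq (a : QState3) : QState3 := fun i j k =>
  ![![![-4 * (a 0 0 0) * (a 1 1 1) * (a 1 1 1) + 4 * (a 0 0 1) * (a 1 1 0) * (a 1 1 1) + 4 * (a 0 1 0) * (a 1 0 1) * (a 1 1 1) + 4 * (a 0 1 1) * (a 1 0 0) * (a 1 1 1) - 8 * (a 0 1 1) * (a 1 0 1) * (a 1 1 0),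
       4 * (a 0 0 0) * (a 1 1 0) * (a 1 1 1) - 4 * (a 0 0 1) * (a 1 1 0) * (a 1 1 0) - 8 * (a 0 1 0) * (a 1 0 0) * (a 1 1 1) + 4 * (a 0 1 0) * (a 1 0 1) * (a 1 1 0) + 4 * (a 0 1 1) * (a 1 0 0) * (a 1 1 0)],
     ![4 * (a 0 0 0) * (a 1 0 1) * (a 1 1 1) - 8 * (a 0 0 1) * (a 1 0 0) * (a 1 1 1) + 4 * (a 0 0 1) * (a 1 0 1) * (a 1 1 0) - 4 * (a 0 1 0) * (a 1 0 1) * (a 1 0 1) + 4 * (a 0 1 1) * (a 1 0 0) * (a 1 0 1),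
       4 * (a 0 0 0) * (a 1 0 0) * (a 1 1 1) - 8 * (a 0 0 0) * (a 1 0 1) * (a 1 1 0) + 4 * (a 0 0 1) * (a 1 0 0) * (a 1 1 0) + 4 * (a 0 1 0) * (a 1 0 0) * (a 1 0 1) - 4 * (a 0 1 1) * (a 1 0 0) * (a 1 0 0)]],
   ![![4 * (a 0 0 0) * (a 0 1 1) * (a 1 1 1) - 8 * (a 0 0 1) * (a 0 1 0) * (a 1 1 1) + 4 * (a 0 0 1) * (a 0 1 1) * (a 1 1 0) + 4 * (a 0 1 0) * (a 0 1 1) * (a 1 0 1) - 4 * (a 0 1 1) * (a 0 1 1) * (a 1 0 0),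
       4 * (a 0 0 0) * (a 0 1 0) * (a 1 1 1) - 8 * (a 0 0 0) * (a 0 1 1) * (a 1 1 0) + 4 * (a 0 0 1) * (a 0 1 0) * (a 1 1 0) - 4 * (a 0 1 0) * (a 0 1 0) * (a 1 0 1) + 4 * (a 0 1 0) * (a 0 1 1) * (a 1 0 0)],
     ![4 * (a 0 0 0) * (a 0 0 1) * (a 1 1 1) - 8 * (a 0 0 0) * (a 0 1 1) * (a 1 0 1) - 4 * (a 0 0 1) * (a 0 0 1) * (a 1 1 0) + 4 * (a 0 0 1) * (a 0 1 0) * (a 1 0 1) + 4 * (a 0 0 1) * (a 0 1 1) * (a 1 0 0),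
       -4 * (a 0 0 0) * (a 0 0 0) * (a 1 1 1) + 4 * (a 0 0 0) * (a 0 0 1) * (a 1 1 0) + 4 * (a 0 0 0) * (a 0 1 0) * (a 1 0 1) + 4 * (a 0 0 0) * (a 0 1 1) * (a 1 0 0) - 8 * (a 0 0 1) * (a 0 1 0) * (a 1 0 0)]]] i j k


noncomputable def evq (i j k : Fin 2) : QState3 →L[ℂ] ℂ :=
  (ContinuousLinearMap.proj k).comp ((ContinuousLinearMap.proj j).comp
    (ContinuousLinearMap.proj (R := ℂ) (φ := fun _ : Fin 2 => Fin 2 → Fin 2 → ℂ) i))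

lemma fderiv_quartic_eq_zero (a : QState3) (hT : Tq a = 0) : fderiv ℂ quarticQ3 a = 0 := by
  have hEv : ∀ i j k : Fin 2, HasFDerivAt (fun a : QState3 => a i j k) (evq i j k) a :=
    fun i j k => (evq i j k).hasFDerivAt
  have hq' : quarticQ3 = fun a : QState3 =>
      -2 * ((a 1 1 1 * a 0 0 0 - (a 0 0 1 * a 1 1 0 + a 0 1 0 * a 1 0 1 + a 1 0 0 * a 0 1 1)) *
            (a 1 1 1 * a 0 0 0 - (a 0 0 1 * a 1 1 0 + a 0 1 0 * a 1 0 1 + a 1 0 0 * a 0 1 1))) -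
      8 * (a 1 1 1 * a 0 0 1 * a 0 1 0 * a 1 0 0 + a 0 0 0 * a 1 1 0 * a 1 0 1 * a 0 1 1 -
      (a 0 1 0 * a 1 0 0 * a 1 0 1 * a 0 1 1 + a 0 0 1 * a 1 0 0 * a 1 1 0 * a 0 1 1 +
        a 0 0 1 * a 0 1 0 * a 1 1 0 * a 1 0 1)) := by
    funext b; simp only [quarticQ3]; ring
  have hs : HasFDerivAt (fun a : QState3 => (a 1 1 1 * a 0 0 0 -
      (a 0 0 1 * a 1 1 0 + a 0 1 0 * a 1 0 1 + a 1 0 0 * a 0 1 1))) _ a :=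
    ((hEv 1 1 1).mul (hEv 0 0 0)).sub
      ((((hEv 0 0 1).mul (hEv 1 1 0)).add ((hEv 0 1 0).mul (hEv 1 0 1))).add
        ((hEv 1 0 0).mul (hEv 0 1 1)))
  have hp : HasFDerivAt (fun a : QState3 =>
      (a 1 1 1 * a 0 0 1 * a 0 1 0 * a 1 0 0 + a 0 0 0 * a 1 1 0 * a 1 0 1 * a 0 1 1 -
      (a 0 1 0 * a 1 0 0 * a 1 0 1 * a 0 1 1 + a 0 0 1 * a 1 0 0 * a 1 1 0 * a 0 1 1 +
        a 0 0 1 * a 0 1 0 * a 1 1 0 * a 1 0 1))) _ a :=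
    (((((hEv 1 1 1).mul (hEv 0 0 1)).mul (hEv 0 1 0)).mul (hEv 1 0 0)).add
      ((((hEv 0 0 0).mul (hEv 1 1 0)).mul (hEv 1 0 1)).mul (hEv 0 1 1))).sub
      ((((((hEv 0 1 0).mul (hEv 1 0 0)).mul (hEv 1 0 1)).mul (hEv 0 1 1)).add
        ((((hEv 0 0 1).mul (hEv 1 0 0)).mul (hEv 1 1 0)).mul (hEv 0 1 1))).add
        ((((hEv 0 0 1).mul (hEv 0 1 0)).mul (hEv 1 1 0)).mul (hEv 1 0 1)))
  have hD := ((hs.mul hs).const_mul (-2 : ℂ)).sub (hp.const_mul (8 : ℂ))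
  rw [hq']; refine hD.fderiv.trans ?_
  have h000 : (-4 * (a 0 0 0) * (a 1 1 1) * (a 1 1 1) + 4 * (a 0 0 1) * (a 1 1 0) * (a 1 1 1) + 4 * (a 0 1 0) * (a 1 0 1) * (a 1 1 1) + 4 * (a 0 1 1) * (a 1 0 0) * (a 1 1 1) - 8 * (a 0 1 1) * (a 1 0 1) * (a 1 1 0)) = 0 := by
    have h := congrFun (congrFun (congrFun hT 0) 0) 0
    simpa only [Tq, Matrix.cons_val_zero, Matrix.cons_val_one, Matrix.head_cons,
      Pi.zero_apply] using h
  have h001 : (4 * (a 0 0 0) * (a 1 1 0) * (a 1 1 1) - 4 * (a 0 0 1) * (a 1 1 0) * (a 1 1 0) - 8 * (a 0 1 0) * (a 1 0 0) * (a 1 1 1) + 4 * (a 0 1 0) * (a 1 0 1) * (a 1 1 0) + 4 * (a 0 1 1) * (a 1 0 0) * (a 1 1 0)) = 0 := by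
    have h := congrFun (congrFun (congrFun hT 0) 0) 1
    simpa only [Tq, Matrix.cons_val_zero, Matrix.cons_val_one, Matrix.head_cons,
      Pi.zero_apply] using h
  have h010 : (4 * (a 0 0 0) * (a 1 0 1) * (a 1 1 1) - 8 * (a 0 0 1) * (a 1 0 0) * (a 1 1 1) + 4 * (a 0 0 1) * (a 1 0 1) * (a 1 1 0) - 4 * (a 0 1 0) * (a 1 0 1) * (a 1 0 1) + 4 * (a 0 1 1) * (a 1 0 0) * (a 1 0 1)) = 0 := by
    have h := congrFun (congrFun (congrFun hT 0) 1) 0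
    simpa only [Tq, Matrix.cons_val_zero, Matrix.cons_val_one, Matrix.head_cons,
      Pi.zero_apply] using h
  have h011 : (4 * (a 0 0 0) * (a 1 0 0) * (a 1 1 1) - 8 * (a 0 0 0) * (a 1 0 1) * (a 1 1 0) + 4 * (a 0 0 1) * (a 1 0 0) * (a 1 1 0) + 4 * (a 0 1 0) * (a 1 0 0) * (a 1 0 1) - 4 * (a 0 1 1) * (a 1 0 0) * (a 1 0 0)) = 0 := by
    have h := congrFun (congrFun (congrFun hT 0) 1) 1
    simpa only [Tq, Matrix.cons_val_zero, Matrix.cons_val_one, Matrix.head_cons,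
      Pi.zero_apply] using h
  have h100 : (4 * (a 0 0 0) * (a 0 1 1) * (a 1 1 1) - 8 * (a 0 0 1) * (a 0 1 0) * (a 1 1 1) + 4 * (a 0 0 1) * (a 0 1 1) * (a 1 1 0) + 4 * (a 0 1 0) * (a 0 1 1) * (a 1 0 1) - 4 * (a 0 1 1) * (a 0 1 1) * (a 1 0 0)) = 0 := by
    have h := congrFun (congrFun (congrFun hT 1) 0) 0
    simpa only [Tq, Matrix.cons_val_zero, Matrix.cons_val_one, Matrix.head_cons,
      Pi.zero_apply] using h
  have h101 : (4 * (a 0 0 0) * (a 0 1 0) * (a 1 1 1) - 8 * (a 0 0 0) * (a 0 1 1) * (a 1 1 0) + 4 * (a 0 0 1) * (a 0 1 0) * (a 1 1 0) - 4 * (a 0 1 0) * (a 0 1 0) * (a 1 0 1) + 4 * (a 0 1 0) * (a 0 1 1) * (a 1 0 0)) = 0 := by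
    have h := congrFun (congrFun (congrFun hT 1) 0) 1
    simpa only [Tq, Matrix.cons_val_zero, Matrix.cons_val_one, Matrix.head_cons,
      Pi.zero_apply] using h
  have h110 : (4 * (a 0 0 0) * (a 0 0 1) * (a 1 1 1) - 8 * (a 0 0 0) * (a 0 1 1) * (a 1 0 1) - 4 * (a 0 0 1) * (a 0 0 1) * (a 1 1 0) + 4 * (a 0 0 1) * (a 0 1 0) * (a 1 0 1) + 4 * (a 0 0 1) * (a 0 1 1) * (a 1 0 0)) = 0 := by
    have h := congrFun (congrFun (congrFun hT 1) 1) 0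
    simpa only [Tq, Matrix.cons_val_zero, Matrix.cons_val_one, Matrix.head_cons,
      Pi.zero_apply] using h
  have h111 : (-4 * (a 0 0 0) * (a 0 0 0) * (a 1 1 1) + 4 * (a 0 0 0) * (a 0 0 1) * (a 1 1 0) + 4 * (a 0 0 0) * (a 0 1 0) * (a 1 0 1) + 4 * (a 0 0 0) * (a 0 1 1) * (a 1 0 0) - 8 * (a 0 0 1) * (a 0 1 0) * (a 1 0 0)) = 0 := by
    have h := congrFun (congrFun (congrFun hT 1) 1) 1
    simpa only [Tq, Matrix.cons_val_zero, Matrix.cons_val_one, Matrix.head_cons,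
      Pi.zero_apply] using h
  ext z
  simp [evq]
  linear_combination (z 0 0 0) * h000 + (z 0 0 1) * h001 + (z 0 1 0) * h010 + (z 0 1 1) * h011 + (z 1 0 0) * h100 + (z 1 0 1) * h101 + (z 1 1 0) * h110 + (z 1 1 1) * h111

lemma Tq_ne_zero_of_fderiv (a : QState3) (h : fderiv ℂ quarticQ3 a ≠ 0) : Tq a ≠ 0 :=
  fun hT => h (fderiv_quartic_eq_zero a hT)


def alphaP (a : QState3) : ℂ := (a 0 0 0) * (a 0 1 1) - (a 0 0 1) * (a 0 1 0)
def betaP (a : QState3) : ℂ := (a 0 0 0) * (a 1 1 1) - (a 0 0 1) * (a 1 1 0) - (a 0 1 0) * (a 1 0 1) + (a 0 1 1) * (a 1 0 0)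
def gammaP (a : QState3) : ℂ := (a 1 0 0) * (a 1 1 1) - (a 1 0 1) * (a 1 1 0)

lemma quartic_factor (a : QState3) :
    quarticQ3 a = -2 * ((betaP a)^2 - 4 * alphaP a * gammaP a) := by
  simp only [quarticQ3, alphaP, betaP, gammaP]; ring


lemma Tq_eq_zero_of_pencil (a : QState3) (hα : alphaP a = 0) (hβ : betaP a = 0)
    (hγ : gammaP a = 0) : Tq a = 0 := by
  simp only [alphaP, betaP, gammaP] at hα hβ hγ
  funext i j k
  fin_cases i <;> fin_cases j <;> fin_cases k <;>
    simp only [Tq, Matrix.cons_val_zero, Matrix.cons_val_one, Matrix.head_cons, Pi.zero_apply,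
      Fin.zero_eta, Fin.mk_one]
  · linear_combination (-4 * (a 1 1 1)) * hβ + (8 * (a 0 1 1)) * hγ
  · linear_combination (4 * (a 1 1 0)) * hβ + (-8 * (a 0 1 0)) * hγ
  · linear_combination (4 * (a 1 0 1)) * hβ + (-8 * (a 0 0 1)) * hγ
  · linear_combination (-4 * (a 1 0 0)) * hβ + (8 * (a 0 0 0)) * hγ
  · linear_combination (8 * (a 1 1 1)) * hα + (-4 * (a 0 1 1)) * hβ
  · linear_combination (-8 * (a 1 1 0)) * hα + (4 * (a 0 1 0)) * hβ
  · linear_combination (-8 * (a 1 0 1)) * hα + (4 * (a 0 0 1)) * hβ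
  · linear_combination (8 * (a 1 0 0)) * hα + (-4 * (a 0 0 0)) * hβ

set_option maxHeartbeats 1000000 in
lemma quartic_act1 (g : SL2C) (a : QState3) :
    quarticQ3 (sloccAct g 1 1 a) = quarticQ3 a := by
  obtain ⟨p, q, r, s, hg, hdet⟩ := sl2_entries g
  simp [quarticQ3, sloccAct, hg, Fin.sum_univ_two, Matrix.one_apply]
  linear_combination (-2 * (a 0 0 0) * (a 0 0 0) * (a 1 1 1) * (a 1 1 1) * (p) * (s) + 2 * (a 0 0 0) * (a 0 0 0) * (a 1 1 1) * (a 1 1 1) * (q) * (r) - 2 * (a 0 0 0) * (a 0 0 0) * (a 1 1 1) * (a 1 1 1) + 4 * (a 0 0 0) * (a 0 0 1) * (a 1 1 0) * (a 1 1 1) * (p) * (s) - 4 * (a 0 0 0) * (a 0 0 1) * (a 1 1 0) * (a 1 1 1) * (q) * (r) + 4 * (a 0 0 0) * (a 0 0 1) * (a 1 1 0) * (a 1 1 1) + 4 * (a 0 0 0) * (a 0 1 0) * (a 1 0 1) * (a 1 1 1) * (p) * (s) - 4 * (a 0 0 0) * (a 0 1 0) * (a 1 0 1) * (a 1 1 1)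 * (q) * (r) + 4 * (a 0 0 0) * (a 0 1 0) * (a 1 0 1) * (a 1 1 1) + 4 * (a 0 0 0) * (a 0 1 1) * (a 1 0 0) * (a 1 1 1) * (p) * (s) - 4 * (a 0 0 0) * (a 0 1 1) * (a 1 0 0) * (a 1 1 1) * (q) * (r) + 4 * (a 0 0 0) * (a 0 1 1) * (a 1 0 0) * (a 1 1 1) - 8 * (a 0 0 0) * (a 0 1 1) * (a 1 0 1) * (a 1 1 0) * (p) * (s) + 8 * (a 0 0 0) * (a 0 1 1) * (a 1 0 1) * (a 1 1 0) * (q) * (r) - 8 * (a 0 0 0) * (a 0 1 1) * (a 1 0 1) * (a 1 1 0) - 2 * (a 0 0 1) * (a 0 0 1) * (a 1 1 0) * (a 1 1 0) * (p) * (s) + 2 * (a 0 0 1) * (a 0 0 1) * (a 1 1 0) * (a 1 1 0) * (q) * (r) - 2 * (a 0 0 1) * (a 0 0 1) * (a 1 1 0) * (a 1 1 0) - 8 * (a 0 0 1) * (a 0 1 0) * (a 1 0 0) * (a 1 1 1) * (p) * (s) + 8 * (a 0 0 1) * (a 0 1 0) * (a 1 0 0) * (a 1 1 1) * (q) * (r)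 - 8 * (a 0 0 1) * (a 0 1 0) * (a 1 0 0) * (a 1 1 1) + 4 * (a 0 0 1) * (a 0 1 0) * (a 1 0 1) * (a 1 1 0) * (p) * (s) - 4 * (a 0 0 1) * (a 0 1 0) * (a 1 0 1) * (a 1 1 0) * (q) * (r) + 4 * (a 0 0 1) * (a 0 1 0) * (a 1 0 1) * (a 1 1 0) + 4 * (a 0 0 1) * (a 0 1 1) * (a 1 0 0) * (a 1 1 0) * (p) * (s) - 4 * (a 0 0 1) * (a 0 1 1) * (a 1 0 0) * (a 1 1 0) * (q) * (r) + 4 * (a 0 0 1) * (a 0 1 1) * (a 1 0 0) * (a 1 1 0) - 2 * (a 0 1 0) * (a 0 1 0) * (a 1 0 1) * (a 1 0 1) * (p) * (s) + 2 * (a 0 1 0) * (a 0 1 0) * (a 1 0 1) * (a 1 0 1) * (q) * (r) - 2 * (a 0 1 0) * (a 0 1 0) * (a 1 0 1) * (a 1 0 1) + 4 * (a 0 1 0) * (a 0 1 1) * (a 1 0 0) * (a 1 0 1) * (p) * (s) - 4 * (a 0 1 0) * (a 0 1 1) * (a 1 0 0) * (a 1 0 1) * (q) * (r) + 4 * (a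 0 1 0) * (a 0 1 1) * (a 1 0 0) * (a 1 0 1) - 2 * (a 0 1 1) * (a 0 1 1) * (a 1 0 0) * (a 1 0 0) * (p) * (s) + 2 * (a 0 1 1) * (a 0 1 1) * (a 1 0 0) * (a 1 0 0) * (q) * (r) - 2 * (a 0 1 1) * (a 0 1 1) * (a 1 0 0) * (a 1 0 0)) * hdet


set_option maxHeartbeats 2000000 in
lemma Tq_act1 (g : SL2C) (a : QState3) :
    ∃ g' : SL2C, Tq (sloccAct g 1 1 a) = sloccAct g' 1 1 (Tq a) := by
  obtain ⟨p, q, r, s, hg, hdet⟩ := sl2_entries g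
  refine ⟨mkSL !![s, -r; -q, p] (by rw [Matrix.det_fin_two_of]; linear_combination hdet), ?_⟩
  funext i j k
  fin_cases i <;> fin_cases j <;> fin_cases k
  · simp [Tq, sloccAct, hg, Fin.sum_univ_two, Matrix.one_apply]
    linear_combination (-4 * (a 0 0 0) * (a 0 1 1) * (a 1 1 1) * (r) - 4 * (a 0 0 0) * (a 1 1 1) * (a 1 1 1) * (s) + 8 * (a 0 0 1) * (a 0 1 0) * (a 1 1 1) * (r) - 4 * (a 0 0 1) * (a 0 1 1) * (a 1 1 0) * (r) + 4 * (a 0 0 1) * (a 1 1 0) * (a 1 1 1) * (s) - 4 * (a 0 1 0) * (a 0 1 1) * (a 1 0 1) * (r) + 4 * (a 0 1 0) * (a 1 0 1) * (a 1 1 1) * (s) + 4 * (a 0 1 1) * (a 0 1 1) * (a 1 0 0) * (r) + 4 * (a 0 1 1) * (a 1 0 0) * (a 1 1 1) * (s) - 8 * (a 0 1 1) * (a 1 0 1) * (a 1 1 0) * (s)) * hdet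
  · simp [Tq, sloccAct, hg, Fin.sum_univ_two, Matrix.one_apply]
    linear_combination (-4 * (a 0 0 0) * (a 0 1 0) * (a 1 1 1) * (r) + 8 * (a 0 0 0) * (a 0 1 1) * (a 1 1 0) * (r) + 4 * (a 0 0 0) * (a 1 1 0) * (a 1 1 1) * (s) - 4 * (a 0 0 1) * (a 0 1 0) * (a 1 1 0) * (r) - 4 * (a 0 0 1) * (a 1 1 0) * (a 1 1 0) * (s) + 4 * (a 0 1 0) * (a 0 1 0) * (a 1 0 1) * (r) - 4 * (a 0 1 0) * (a 0 1 1) * (a 1 0 0) * (r) - 8 * (a 0 1 0) * (a 1 0 0) * (a 1 1 1) * (s) + 4 * (a 0 1 0) * (a 1 0 1) * (a 1 1 0) * (s) + 4 * (a 0 1 1) * (a 1 0 0) * (a 1 1 0) * (s)) * hdet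
  · simp [Tq, sloccAct, hg, Fin.sum_univ_two, Matrix.one_apply]
    linear_combination (-4 * (a 0 0 0) * (a 0 0 1) * (a 1 1 1) * (r) + 8 * (a 0 0 0) * (a 0 1 1) * (a 1 0 1) * (r) + 4 * (a 0 0 0) * (a 1 0 1) * (a 1 1 1) * (s) + 4 * (a 0 0 1) * (a 0 0 1) * (a 1 1 0) * (r) - 4 * (a 0 0 1) * (a 0 1 0) * (a 1 0 1) * (r) - 4 * (a 0 0 1) * (a 0 1 1) * (a 1 0 0) * (r) - 8 * (a 0 0 1) * (a 1 0 0) * (a 1 1 1) * (s) + 4 * (a 0 0 1) * (a 1 0 1) * (a 1 1 0) * (s) - 4 * (a 0 1 0) * (a 1 0 1) * (a 1 0 1) * (s) + 4 * (a 0 1 1) * (a 1 0 0) * (a 1 0 1) * (s)) * hdet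
  · simp [Tq, sloccAct, hg, Fin.sum_univ_two, Matrix.one_apply]
    linear_combination (4 * (a 0 0 0) * (a 0 0 0) * (a 1 1 1) * (r) - 4 * (a 0 0 0) * (a 0 0 1) * (a 1 1 0) * (r) - 4 * (a 0 0 0) * (a 0 1 0) * (a 1 0 1) * (r) - 4 * (a 0 0 0) * (a 0 1 1) * (a 1 0 0) * (r) + 4 * (a 0 0 0) * (a 1 0 0) * (a 1 1 1) * (s) - 8 * (a 0 0 0) * (a 1 0 1) * (a 1 1 0) * (s) + 8 * (a 0 0 1) * (a 0 1 0) * (a 1 0 0) * (r) + 4 * (a 0 0 1) * (a 1 0 0) * (a 1 1 0) * (s) + 4 * (a 0 1 0) * (a 1 0 0) * (a 1 0 1) * (s) - 4 * (a 0 1 1) * (a 1 0 0) * (a 1 0 0) * (s)) * hdet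
  · simp [Tq, sloccAct, hg, Fin.sum_univ_two, Matrix.one_apply]
    linear_combination (4 * (a 0 0 0) * (a 0 1 1) * (a 1 1 1) * (p) + 4 * (a 0 0 0) * (a 1 1 1) * (a 1 1 1) * (q) - 8 * (a 0 0 1) * (a 0 1 0) * (a 1 1 1) * (p) + 4 * (a 0 0 1) * (a 0 1 1) * (a 1 1 0) * (p) - 4 * (a 0 0 1) * (a 1 1 0) * (a 1 1 1) * (q) + 4 * (a 0 1 0) * (a 0 1 1) * (a 1 0 1) * (p) - 4 * (a 0 1 0) * (a 1 0 1) * (a 1 1 1) * (q) - 4 * (a 0 1 1) * (a 0 1 1) * (a 1 0 0) * (p) - 4 * (a 0 1 1) * (a 1 0 0) * (a 1 1 1) * (q) + 8 * (a 0 1 1) * (a 1 0 1) * (a 1 1 0) * (q)) * hdet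
  · simp [Tq, sloccAct, hg, Fin.sum_univ_two, Matrix.one_apply]
    linear_combination (4 * (a 0 0 0) * (a 0 1 0) * (a 1 1 1) * (p) - 8 * (a 0 0 0) * (a 0 1 1) * (a 1 1 0) * (p) - 4 * (a 0 0 0) * (a 1 1 0) * (a 1 1 1) * (q) + 4 * (a 0 0 1) * (a 0 1 0) * (a 1 1 0) * (p) + 4 * (a 0 0 1) * (a 1 1 0) * (a 1 1 0) * (q) - 4 * (a 0 1 0) * (a 0 1 0) * (a 1 0 1) * (p) + 4 * (a 0 1 0) * (a 0 1 1) * (a 1 0 0) * (p) + 8 * (a 0 1 0) * (a 1 0 0) * (a 1 1 1) * (q) - 4 * (a 0 1 0) * (a 1 0 1) * (a 1 1 0) * (q) - 4 * (a 0 1 1) * (a 1 0 0) * (a 1 1 0) * (q)) * hdet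
  · simp [Tq, sloccAct, hg, Fin.sum_univ_two, Matrix.one_apply]
    linear_combination (4 * (a 0 0 0) * (a 0 0 1) * (a 1 1 1) * (p) - 8 * (a 0 0 0) * (a 0 1 1) * (a 1 0 1) * (p) - 4 * (a 0 0 0) * (a 1 0 1) * (a 1 1 1) * (q) - 4 * (a 0 0 1) * (a 0 0 1) * (a 1 1 0) * (p) + 4 * (a 0 0 1) * (a 0 1 0) * (a 1 0 1) * (p) + 4 * (a 0 0 1) * (a 0 1 1) * (a 1 0 0) * (p) + 8 * (a 0 0 1) * (a 1 0 0) * (a 1 1 1) * (q) - 4 * (a 0 0 1) * (a 1 0 1) * (a 1 1 0) * (q) + 4 * (a 0 1 0) * (a 1 0 1) * (a 1 0 1) * (q) - 4 * (a 0 1 1) * (a 1 0 0) * (a 1 0 1) * (q)) * hdet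
  · simp [Tq, sloccAct, hg, Fin.sum_univ_two, Matrix.one_apply]
    linear_combination (-4 * (a 0 0 0) * (a 0 0 0) * (a 1 1 1) * (p) + 4 * (a 0 0 0) * (a 0 0 1) * (a 1 1 0) * (p) + 4 * (a 0 0 0) * (a 0 1 0) * (a 1 0 1) * (p) + 4 * (a 0 0 0) * (a 0 1 1) * (a 1 0 0) * (p) - 4 * (a 0 0 0) * (a 1 0 0) * (a 1 1 1) * (q) + 8 * (a 0 0 0) * (a 1 0 1) * (a 1 1 0) * (q) - 8 * (a 0 0 1) * (a 0 1 0) * (a 1 0 0) * (p) - 4 * (a 0 0 1) * (a 1 0 0) * (a 1 1 0) * (q) - 4 * (a 0 1 0) * (a 1 0 0) * (a 1 0 1) * (q) + 4 * (a 0 1 1) * (a 1 0 0) * (a 1 0 0) * (q)) * hdet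


set_option maxHeartbeats 1000000 in
lemma quartic_act2 (g : SL2C) (a : QState3) :
    quarticQ3 (sloccAct 1 g 1 a) = quarticQ3 a := by
  obtain ⟨p, q, r, s, hg, hdet⟩ := sl2_entries g
  simp [quarticQ3, sloccAct, hg, Fin.sum_univ_two, Matrix.one_apply]
  linear_combination (-2 * (a 0 0 0) * (a 0 0 0) * (a 1 1 1) * (a 1 1 1) * (p) * (s) + 2 * (a 0 0 0) * (a 0 0 0) * (a 1 1 1) * (a 1 1 1) * (q) * (r) - 2 * (a 0 0 0) * (a 0 0 0) * (a 1 1 1) * (a 1 1 1) + 4 * (a 0 0 0) * (a 0 0 1) * (a 1 1 0) * (a 1 1 1) * (p) * (s) - 4 * (a 0 0 0) * (a 0 0 1) * (a 1 1 0) * (a 1 1 1) * (q) * (r) + 4 * (a 0 0 0) * (a 0 0 1) * (a 1 1 0) * (a 1 1 1) + 4 * (a 0 0 0) * (a 0 1 0) * (a 1 0 1) * (a 1 1 1) * (p) * (s) - 4 * (a 0 0 0) * (a 0 1 0) * (a 1 0 1) * (a 1 1 1) * (q) * (r) + 4 * (a 0 0 0) * (a 0 1 0) * (a 1 0 1) *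 (a 1 1 1) + 4 * (a 0 0 0) * (a 0 1 1) * (a 1 0 0) * (a 1 1 1) * (p) * (s) - 4 * (a 0 0 0) * (a 0 1 1) * (a 1 0 0) * (a 1 1 1) * (q) * (r) + 4 * (a 0 0 0) * (a 0 1 1) * (a 1 0 0) * (a 1 1 1) - 8 * (a 0 0 0) * (a 0 1 1) * (a 1 0 1) * (a 1 1 0) * (p) * (s) + 8 * (a 0 0 0) * (a 0 1 1) * (a 1 0 1) * (a 1 1 0) * (q) * (r) - 8 * (a 0 0 0) * (a 0 1 1) * (a 1 0 1) * (a 1 1 0) - 2 * (a 0 0 1) * (a 0 0 1) * (a 1 1 0) * (a 1 1 0) * (p) * (s) + 2 * (a 0 0 1) * (a 0 0 1) * (a 1 1 0) * (a 1 1 0) * (q) * (r) - 2 * (a 0 0 1) * (a 0 0 1) * (a 1 1 0) * (a 1 1 0) - 8 * (a 0 0 1) * (a 0 1 0) * (a 1 0 0) * (a 1 1 1) * (p) * (s) + 8 * (a 0 0 1) * (a 0 1 0) * (a 1 0 0) * (a 1 1 1) * (q) * (r) - 8 * (a 0 0 1) * (a 0 1 0) * (a 1 0 0) * (a 1 1 1)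 + 4 * (a 0 0 1) * (a 0 1 0) * (a 1 0 1) * (a 1 1 0) * (p) * (s) - 4 * (a 0 0 1) * (a 0 1 0) * (a 1 0 1) * (a 1 1 0) * (q) * (r) + 4 * (a 0 0 1) * (a 0 1 0) * (a 1 0 1) * (a 1 1 0) + 4 * (a 0 0 1) * (a 0 1 1) * (a 1 0 0) * (a 1 1 0) * (p) * (s) - 4 * (a 0 0 1) * (a 0 1 1) * (a 1 0 0) * (a 1 1 0) * (q) * (r) + 4 * (a 0 0 1) * (a 0 1 1) * (a 1 0 0) * (a 1 1 0) - 2 * (a 0 1 0) * (a 0 1 0) * (a 1 0 1) * (a 1 0 1) * (p) * (s) + 2 * (a 0 1 0) * (a 0 1 0) * (a 1 0 1) * (a 1 0 1) * (q) * (r) - 2 * (a 0 1 0) * (a 0 1 0) * (a 1 0 1) * (a 1 0 1) + 4 * (a 0 1 0) * (a 0 1 1) * (a 1 0 0) * (a 1 0 1) * (p) * (s) - 4 * (a 0 1 0) * (a 0 1 1) * (a 1 0 0) * (a 1 0 1) * (q) * (r) + 4 * (a 0 1 0) * (a 0 1 1) * (a 1 0 0) * (a 1 0 1) - 2 * (a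 0 1 1) * (a 0 1 1) * (a 1 0 0) * (a 1 0 0) * (p) * (s) + 2 * (a 0 1 1) * (a 0 1 1) * (a 1 0 0) * (a 1 0 0) * (q) * (r) - 2 * (a 0 1 1) * (a 0 1 1) * (a 1 0 0) * (a 1 0 0)) * hdet


set_option maxHeartbeats 2000000 in
lemma Tq_act2 (g : SL2C) (a : QState3) :
    ∃ g' : SL2C, Tq (sloccAct 1 g 1 a) = sloccAct 1 g' 1 (Tq a) := by
  obtain ⟨p, q, r, s, hg, hdet⟩ := sl2_entries g
  refine ⟨mkSL !![s, -r; -q, p] (by rw [Matrix.det_fin_two_of]; linear_combination hdet), ?_⟩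
  funext i j k
  fin_cases i <;> fin_cases j <;> fin_cases k
  · simp [Tq, sloccAct, hg, Fin.sum_univ_two, Matrix.one_apply]
    linear_combination (-4 * (a 0 0 0) * (a 1 0 1) * (a 1 1 1) * (r) - 4 * (a 0 0 0) * (a 1 1 1) * (a 1 1 1) * (s) + 8 * (a 0 0 1) * (a 1 0 0) * (a 1 1 1) * (r) - 4 * (a 0 0 1) * (a 1 0 1) * (a 1 1 0) * (r) + 4 * (a 0 0 1) * (a 1 1 0) * (a 1 1 1) * (s) + 4 * (a 0 1 0) * (a 1 0 1) * (a 1 0 1) * (r) + 4 * (a 0 1 0) * (a 1 0 1) * (a 1 1 1) * (s) - 4 * (a 0 1 1) * (a 1 0 0) * (a 1 0 1) * (r) + 4 * (a 0 1 1) * (a 1 0 0) * (a 1 1 1) * (s) - 8 * (a 0 1 1) * (a 1 0 1) * (a 1 1 0) * (s)) * hdet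
  · simp [Tq, sloccAct, hg, Fin.sum_univ_two, Matrix.one_apply]
    linear_combination (-4 * (a 0 0 0) * (a 1 0 0) * (a 1 1 1) * (r) + 8 * (a 0 0 0) * (a 1 0 1) * (a 1 1 0) * (r) + 4 * (a 0 0 0) * (a 1 1 0) * (a 1 1 1) * (s) - 4 * (a 0 0 1) * (a 1 0 0) * (a 1 1 0) * (r) - 4 * (a 0 0 1) * (a 1 1 0) * (a 1 1 0) * (s) - 4 * (a 0 1 0) * (a 1 0 0) * (a 1 0 1) * (r) - 8 * (a 0 1 0) * (a 1 0 0) * (a 1 1 1) * (s) + 4 * (a 0 1 0) * (a 1 0 1) * (a 1 1 0) * (s) + 4 * (a 0 1 1) * (a 1 0 0) * (a 1 0 0) * (r) + 4 * (a 0 1 1) * (a 1 0 0) * (a 1 1 0) * (s)) * hdet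
  · simp [Tq, sloccAct, hg, Fin.sum_univ_two, Matrix.one_apply]
    linear_combination (4 * (a 0 0 0) * (a 1 0 1) * (a 1 1 1) * (p) + 4 * (a 0 0 0) * (a 1 1 1) * (a 1 1 1) * (q) - 8 * (a 0 0 1) * (a 1 0 0) * (a 1 1 1) * (p) + 4 * (a 0 0 1) * (a 1 0 1) * (a 1 1 0) * (p) - 4 * (a 0 0 1) * (a 1 1 0) * (a 1 1 1) * (q) - 4 * (a 0 1 0) * (a 1 0 1) * (a 1 0 1) * (p) - 4 * (a 0 1 0) * (a 1 0 1) * (a 1 1 1) * (q) + 4 * (a 0 1 1) * (a 1 0 0) * (a 1 0 1) * (p) - 4 * (a 0 1 1) * (a 1 0 0) * (a 1 1 1) * (q) + 8 * (a 0 1 1) * (a 1 0 1) * (a 1 1 0) * (q)) * hdet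
  · simp [Tq, sloccAct, hg, Fin.sum_univ_two, Matrix.one_apply]
    linear_combination (4 * (a 0 0 0) * (a 1 0 0) * (a 1 1 1) * (p) - 8 * (a 0 0 0) * (a 1 0 1) * (a 1 1 0) * (p) - 4 * (a 0 0 0) * (a 1 1 0) * (a 1 1 1) * (q) + 4 * (a 0 0 1) * (a 1 0 0) * (a 1 1 0) * (p) + 4 * (a 0 0 1) * (a 1 1 0) * (a 1 1 0) * (q) + 4 * (a 0 1 0) * (a 1 0 0) * (a 1 0 1) * (p) + 8 * (a 0 1 0) * (a 1 0 0) * (a 1 1 1) * (q) - 4 * (a 0 1 0) * (a 1 0 1) * (a 1 1 0) * (q) - 4 * (a 0 1 1) * (a 1 0 0) * (a 1 0 0) * (p) - 4 * (a 0 1 1) * (a 1 0 0) * (a 1 1 0) * (q)) * hdet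
  · simp [Tq, sloccAct, hg, Fin.sum_univ_two, Matrix.one_apply]
    linear_combination (-4 * (a 0 0 0) * (a 0 0 1) * (a 1 1 1) * (r) + 8 * (a 0 0 0) * (a 0 1 1) * (a 1 0 1) * (r) + 4 * (a 0 0 0) * (a 0 1 1) * (a 1 1 1) * (s) + 4 * (a 0 0 1) * (a 0 0 1) * (a 1 1 0) * (r) - 4 * (a 0 0 1) * (a 0 1 0) * (a 1 0 1) * (r) - 8 * (a 0 0 1) * (a 0 1 0) * (a 1 1 1) * (s) - 4 * (a 0 0 1) * (a 0 1 1) * (a 1 0 0) * (r) + 4 * (a 0 0 1) * (a 0 1 1) * (a 1 1 0) * (s) + 4 * (a 0 1 0) * (a 0 1 1) * (a 1 0 1) * (s) - 4 * (a 0 1 1) * (a 0 1 1) * (a 1 0 0) * (s)) * hdet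
  · simp [Tq, sloccAct, hg, Fin.sum_univ_two, Matrix.one_apply]
    linear_combination (4 * (a 0 0 0) * (a 0 0 0) * (a 1 1 1) * (r) - 4 * (a 0 0 0) * (a 0 0 1) * (a 1 1 0) * (r) - 4 * (a 0 0 0) * (a 0 1 0) * (a 1 0 1) * (r) + 4 * (a 0 0 0) * (a 0 1 0) * (a 1 1 1) * (s) - 4 * (a 0 0 0) * (a 0 1 1) * (a 1 0 0) * (r) - 8 * (a 0 0 0) * (a 0 1 1) * (a 1 1 0) * (s) + 8 * (a 0 0 1) * (a 0 1 0) * (a 1 0 0) * (r) + 4 * (a 0 0 1) * (a 0 1 0) * (a 1 1 0) * (s) - 4 * (a 0 1 0) * (a 0 1 0) * (a 1 0 1) * (s) + 4 * (a 0 1 0) * (a 0 1 1) * (a 1 0 0) * (s)) * hdet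
  · simp [Tq, sloccAct, hg, Fin.sum_univ_two, Matrix.one_apply]
    linear_combination (4 * (a 0 0 0) * (a 0 0 1) * (a 1 1 1) * (p) - 8 * (a 0 0 0) * (a 0 1 1) * (a 1 0 1) * (p) - 4 * (a 0 0 0) * (a 0 1 1) * (a 1 1 1) * (q) - 4 * (a 0 0 1) * (a 0 0 1) * (a 1 1 0) * (p) + 4 * (a 0 0 1) * (a 0 1 0) * (a 1 0 1) * (p) + 8 * (a 0 0 1) * (a 0 1 0) * (a 1 1 1) * (q) + 4 * (a 0 0 1) * (a 0 1 1) * (a 1 0 0) * (p) - 4 * (a 0 0 1) * (a 0 1 1) * (a 1 1 0) * (q) - 4 * (a 0 1 0) * (a 0 1 1) * (a 1 0 1) * (q) + 4 * (a 0 1 1) * (a 0 1 1) * (a 1 0 0) * (q)) * hdet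
  · simp [Tq, sloccAct, hg, Fin.sum_univ_two, Matrix.one_apply]
    linear_combination (-4 * (a 0 0 0) * (a 0 0 0) * (a 1 1 1) * (p) + 4 * (a 0 0 0) * (a 0 0 1) * (a 1 1 0) * (p) + 4 * (a 0 0 0) * (a 0 1 0) * (a 1 0 1) * (p) - 4 * (a 0 0 0) * (a 0 1 0) * (a 1 1 1) * (q) + 4 * (a 0 0 0) * (a 0 1 1) * (a 1 0 0) * (p) + 8 * (a 0 0 0) * (a 0 1 1) * (a 1 1 0) * (q) - 8 * (a 0 0 1) * (a 0 1 0) * (a 1 0 0) * (p) - 4 * (a 0 0 1) * (a 0 1 0) * (a 1 1 0) * (q) + 4 * (a 0 1 0) * (a 0 1 0) * (a 1 0 1) * (q) - 4 * (a 0 1 0) * (a 0 1 1) * (a 1 0 0) * (q)) * hdet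


set_option maxHeartbeats 1000000 in
lemma quartic_act3 (g : SL2C) (a : QState3) :
    quarticQ3 (sloccAct 1 1 g a) = quarticQ3 a := by
  obtain ⟨p, q, r, s, hg, hdet⟩ := sl2_entries g
  simp [quarticQ3, sloccAct, hg, Fin.sum_univ_two, Matrix.one_apply]
  linear_combination (-2 * (a 0 0 0) * (a 0 0 0) * (a 1 1 1) * (a 1 1 1) * (p) * (s) + 2 * (a 0 0 0) * (a 0 0 0) * (a 1 1 1) * (a 1 1 1) * (q) * (r) - 2 * (a 0 0 0) * (a 0 0 0) * (a 1 1 1) * (a 1 1 1) + 4 * (a 0 0 0) * (a 0 0 1) * (a 1 1 0) * (a 1 1 1) * (p) * (s) - 4 * (a 0 0 0) * (a 0 0 1) * (a 1 1 0) * (a 1 1 1) * (q) * (r) + 4 * (a 0 0 0) * (a 0 0 1) * (a 1 1 0) * (a 1 1 1) + 4 * (a 0 0 0) * (a 0 1 0) * (a 1 0 1) * (a 1 1 1) * (p) * (s) - 4 * (a 0 0 0) * (a 0 1 0) * (a 1 0 1) * (a 1 1 1) * (q) * (r) + 4 * (a 0 0 0) * (a 0 1 0) * (a 1 0 1) * (a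 1 1 1) + 4 * (a 0 0 0) * (a 0 1 1) * (a 1 0 0) * (a 1 1 1) * (p) * (s) - 4 * (a 0 0 0) * (a 0 1 1) * (a 1 0 0) * (a 1 1 1) * (q) * (r) + 4 * (a 0 0 0) * (a 0 1 1) * (a 1 0 0) * (a 1 1 1) - 8 * (a 0 0 0) * (a 0 1 1) * (a 1 0 1) * (a 1 1 0) * (p) * (s) + 8 * (a 0 0 0) * (a 0 1 1) * (a 1 0 1) * (a 1 1 0) * (q) * (r) - 8 * (a 0 0 0) * (a 0 1 1) * (a 1 0 1) * (a 1 1 0) - 2 * (a 0 0 1) * (a 0 0 1) * (a 1 1 0) * (a 1 1 0) * (p) * (s) + 2 * (a 0 0 1) * (a 0 0 1) * (a 1 1 0) * (a 1 1 0) * (q) * (r) - 2 * (a 0 0 1) * (a 0 0 1) * (a 1 1 0) * (a 1 1 0) - 8 * (a 0 0 1) * (a 0 1 0) * (a 1 0 0) * (a 1 1 1) * (p) * (s) + 8 * (a 0 0 1) * (a 0 1 0) * (a 1 0 0) * (a 1 1 1) * (q) * (r) - 8 * (a 0 0 1) * (a 0 1 0) * (a 1 0 0) * (a 1 1 1) +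 4 * (a 0 0 1) * (a 0 1 0) * (a 1 0 1) * (a 1 1 0) * (p) * (s) - 4 * (a 0 0 1) * (a 0 1 0) * (a 1 0 1) * (a 1 1 0) * (q) * (r) + 4 * (a 0 0 1) * (a 0 1 0) * (a 1 0 1) * (a 1 1 0) + 4 * (a 0 0 1) * (a 0 1 1) * (a 1 0 0) * (a 1 1 0) * (p) * (s) - 4 * (a 0 0 1) * (a 0 1 1) * (a 1 0 0) * (a 1 1 0) * (q) * (r) + 4 * (a 0 0 1) * (a 0 1 1) * (a 1 0 0) * (a 1 1 0) - 2 * (a 0 1 0) * (a 0 1 0) * (a 1 0 1) * (a 1 0 1) * (p) * (s) + 2 * (a 0 1 0) * (a 0 1 0) * (a 1 0 1) * (a 1 0 1) * (q) * (r) - 2 * (a 0 1 0) * (a 0 1 0) * (a 1 0 1) * (a 1 0 1) + 4 * (a 0 1 0) * (a 0 1 1) * (a 1 0 0) * (a 1 0 1) * (p) * (s) - 4 * (a 0 1 0) * (a 0 1 1) * (a 1 0 0) * (a 1 0 1) * (q) * (r) + 4 * (a 0 1 0) * (a 0 1 1) * (a 1 0 0) * (a 1 0 1) - 2 * (a 0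 1 1) * (a 0 1 1) * (a 1 0 0) * (a 1 0 0) * (p) * (s) + 2 * (a 0 1 1) * (a 0 1 1) * (a 1 0 0) * (a 1 0 0) * (q) * (r) - 2 * (a 0 1 1) * (a 0 1 1) * (a 1 0 0) * (a 1 0 0)) * hdet


set_option maxHeartbeats 2000000 in
lemma Tq_act3 (g : SL2C) (a : QState3) :
    ∃ g' : SL2C, Tq (sloccAct 1 1 g a) = sloccAct 1 1 g' (Tq a) := by
  obtain ⟨p, q, r, s, hg, hdet⟩ := sl2_entries g
  refine ⟨mkSL !![s, -r; -q, p] (by rw [Matrix.det_fin_two_of]; linear_combination hdet), ?_⟩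
  funext i j k
  fin_cases i <;> fin_cases j <;> fin_cases k
  · simp [Tq, sloccAct, hg, Fin.sum_univ_two, Matrix.one_apply]
    linear_combination (-4 * (a 0 0 0) * (a 1 1 0) * (a 1 1 1) * (r) - 4 * (a 0 0 0) * (a 1 1 1) * (a 1 1 1) * (s) + 4 * (a 0 0 1) * (a 1 1 0) * (a 1 1 0) * (r) + 4 * (a 0 0 1) * (a 1 1 0) * (a 1 1 1) * (s) + 8 * (a 0 1 0) * (a 1 0 0) * (a 1 1 1) * (r) - 4 * (a 0 1 0) * (a 1 0 1) * (a 1 1 0) * (r) + 4 * (a 0 1 0) * (a 1 0 1) * (a 1 1 1) * (s) - 4 * (a 0 1 1) * (a 1 0 0) * (a 1 1 0) * (r) + 4 * (a 0 1 1) * (a 1 0 0) * (a 1 1 1) * (s) - 8 * (a 0 1 1) * (a 1 0 1) * (a 1 1 0) * (s)) * hdet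
  · simp [Tq, sloccAct, hg, Fin.sum_univ_two, Matrix.one_apply]
    linear_combination (4 * (a 0 0 0) * (a 1 1 0) * (a 1 1 1) * (p) + 4 * (a 0 0 0) * (a 1 1 1) * (a 1 1 1) * (q) - 4 * (a 0 0 1) * (a 1 1 0) * (a 1 1 0) * (p) - 4 * (a 0 0 1) * (a 1 1 0) * (a 1 1 1) * (q) - 8 * (a 0 1 0) * (a 1 0 0) * (a 1 1 1) * (p) + 4 * (a 0 1 0) * (a 1 0 1) * (a 1 1 0) * (p) - 4 * (a 0 1 0) * (a 1 0 1) * (a 1 1 1) * (q) + 4 * (a 0 1 1) * (a 1 0 0) * (a 1 1 0) * (p) - 4 * (a 0 1 1) * (a 1 0 0) * (a 1 1 1) * (q) + 8 * (a 0 1 1) * (a 1 0 1) * (a 1 1 0) * (q)) * hdet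
  · simp [Tq, sloccAct, hg, Fin.sum_univ_two, Matrix.one_apply]
    linear_combination (-4 * (a 0 0 0) * (a 1 0 0) * (a 1 1 1) * (r) + 8 * (a 0 0 0) * (a 1 0 1) * (a 1 1 0) * (r) + 4 * (a 0 0 0) * (a 1 0 1) * (a 1 1 1) * (s) - 4 * (a 0 0 1) * (a 1 0 0) * (a 1 1 0) * (r) - 8 * (a 0 0 1) * (a 1 0 0) * (a 1 1 1) * (s) + 4 * (a 0 0 1) * (a 1 0 1) * (a 1 1 0) * (s) - 4 * (a 0 1 0) * (a 1 0 0) * (a 1 0 1) * (r) - 4 * (a 0 1 0) * (a 1 0 1) * (a 1 0 1) * (s) + 4 * (a 0 1 1) * (a 1 0 0) * (a 1 0 0) * (r) + 4 * (a 0 1 1) * (a 1 0 0) * (a 1 0 1) * (s)) * hdet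
  · simp [Tq, sloccAct, hg, Fin.sum_univ_two, Matrix.one_apply]
    linear_combination (4 * (a 0 0 0) * (a 1 0 0) * (a 1 1 1) * (p) - 8 * (a 0 0 0) * (a 1 0 1) * (a 1 1 0) * (p) - 4 * (a 0 0 0) * (a 1 0 1) * (a 1 1 1) * (q) + 4 * (a 0 0 1) * (a 1 0 0) * (a 1 1 0) * (p) + 8 * (a 0 0 1) * (a 1 0 0) * (a 1 1 1) * (q) - 4 * (a 0 0 1) * (a 1 0 1) * (a 1 1 0) * (q) + 4 * (a 0 1 0) * (a 1 0 0) * (a 1 0 1) * (p) + 4 * (a 0 1 0) * (a 1 0 1) * (a 1 0 1) * (q) - 4 * (a 0 1 1) * (a 1 0 0) * (a 1 0 0) * (p) - 4 * (a 0 1 1) * (a 1 0 0) * (a 1 0 1) * (q)) * hdet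
  · simp [Tq, sloccAct, hg, Fin.sum_univ_two, Matrix.one_apply]
    linear_combination (-4 * (a 0 0 0) * (a 0 1 0) * (a 1 1 1) * (r) + 8 * (a 0 0 0) * (a 0 1 1) * (a 1 1 0) * (r) + 4 * (a 0 0 0) * (a 0 1 1) * (a 1 1 1) * (s) - 4 * (a 0 0 1) * (a 0 1 0) * (a 1 1 0) * (r) - 8 * (a 0 0 1) * (a 0 1 0) * (a 1 1 1) * (s) + 4 * (a 0 0 1) * (a 0 1 1) * (a 1 1 0) * (s) + 4 * (a 0 1 0) * (a 0 1 0) * (a 1 0 1) * (r) - 4 * (a 0 1 0) * (a 0 1 1) * (a 1 0 0) * (r) + 4 * (a 0 1 0) * (a 0 1 1) * (a 1 0 1) * (s) - 4 * (a 0 1 1) * (a 0 1 1) * (a 1 0 0) * (s)) * hdet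
  · simp [Tq, sloccAct, hg, Fin.sum_univ_two, Matrix.one_apply]
    linear_combination (4 * (a 0 0 0) * (a 0 1 0) * (a 1 1 1) * (p) - 8 * (a 0 0 0) * (a 0 1 1) * (a 1 1 0) * (p) - 4 * (a 0 0 0) * (a 0 1 1) * (a 1 1 1) * (q) + 4 * (a 0 0 1) * (a 0 1 0) * (a 1 1 0) * (p) + 8 * (a 0 0 1) * (a 0 1 0) * (a 1 1 1) * (q) - 4 * (a 0 0 1) * (a 0 1 1) * (a 1 1 0) * (q) - 4 * (a 0 1 0) * (a 0 1 0) * (a 1 0 1) * (p) + 4 * (a 0 1 0) * (a 0 1 1) * (a 1 0 0) * (p) - 4 * (a 0 1 0) * (a 0 1 1) * (a 1 0 1) * (q) + 4 * (a 0 1 1) * (a 0 1 1) * (a 1 0 0) * (q)) * hdet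
  · simp [Tq, sloccAct, hg, Fin.sum_univ_two, Matrix.one_apply]
    linear_combination (4 * (a 0 0 0) * (a 0 0 0) * (a 1 1 1) * (r) - 4 * (a 0 0 0) * (a 0 0 1) * (a 1 1 0) * (r) + 4 * (a 0 0 0) * (a 0 0 1) * (a 1 1 1) * (s) - 4 * (a 0 0 0) * (a 0 1 0) * (a 1 0 1) * (r) - 4 * (a 0 0 0) * (a 0 1 1) * (a 1 0 0) * (r) - 8 * (a 0 0 0) * (a 0 1 1) * (a 1 0 1) * (s) - 4 * (a 0 0 1) * (a 0 0 1) * (a 1 1 0) * (s) + 8 * (a 0 0 1) * (a 0 1 0) * (a 1 0 0) * (r) + 4 * (a 0 0 1) * (a 0 1 0) * (a 1 0 1) * (s) + 4 * (a 0 0 1) * (a 0 1 1) * (a 1 0 0) * (s)) * hdet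
  · simp [Tq, sloccAct, hg, Fin.sum_univ_two, Matrix.one_apply]
    linear_combination (-4 * (a 0 0 0) * (a 0 0 0) * (a 1 1 1) * (p) + 4 * (a 0 0 0) * (a 0 0 1) * (a 1 1 0) * (p) - 4 * (a 0 0 0) * (a 0 0 1) * (a 1 1 1) * (q) + 4 * (a 0 0 0) * (a 0 1 0) * (a 1 0 1) * (p) + 4 * (a 0 0 0) * (a 0 1 1) * (a 1 0 0) * (p) + 8 * (a 0 0 0) * (a 0 1 1) * (a 1 0 1) * (q) + 4 * (a 0 0 1) * (a 0 0 1) * (a 1 1 0) * (q) - 8 * (a 0 0 1) * (a 0 1 0) * (a 1 0 0) * (p) - 4 * (a 0 0 1) * (a 0 1 0) * (a 1 0 1) * (q) - 4 * (a 0 0 1) * (a 0 1 1) * (a 1 0 0) * (q)) * hdet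


lemma sloccAct_split (g₁ g₂ g₃ : SL2C) (a : QState3) :
    sloccAct g₁ g₂ g₃ a = sloccAct g₁ 1 1 (sloccAct 1 g₂ 1 (sloccAct 1 1 g₃ a)) := by
  rw [sloccAct_comp, sloccAct_comp]
  simp

lemma SloccEq.quartic {a b : QState3} (h : SloccEq a b) : quarticQ3 b = quarticQ3 a := by
  obtain ⟨g₁, g₂, g₃, rfl⟩ := h
  rw [sloccAct_split, quartic_act1, quartic_act2, quartic_act3]

lemma SloccEq.tq_ne {a b : QState3} (h : SloccEq a b) (hT : Tq a ≠ 0) : Tq b ≠ 0 := by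
  obtain ⟨g₁, g₂, g₃, rfl⟩ := h
  rw [sloccAct_split]
  obtain ⟨gA, h1⟩ := Tq_act1 g₁ (sloccAct 1 g₂ 1 (sloccAct 1 1 g₃ a))
  obtain ⟨gB, h2⟩ := Tq_act2 g₂ (sloccAct 1 1 g₃ a)
  obtain ⟨gC, h3⟩ := Tq_act3 g₃ a
  rw [h1, h2, h3]
  intro h0
  rw [sloccAct_comp, sloccAct_comp] at h0
  exact hT (sloccAct_eq_zero h0)

def m00P (a : QState3) : ℂ := a 0 1 1 * a 1 0 0 - a 0 0 1 * a 1 1 0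
def m01P (a : QState3) : ℂ := a 0 1 1 * a 1 0 1 - a 0 0 1 * a 1 1 1
def m10P (a : QState3) : ℂ := a 0 0 0 * a 1 1 0 - a 0 1 0 * a 1 0 0
def m11P (a : QState3) : ℂ := a 0 0 0 * a 1 1 1 - a 0 1 0 * a 1 0 1

lemma m00_sq (a : QState3) : m00P a ^ 2 =
    betaP a * m00P a - alphaP a * gammaP a - m01P a * m10P a := by
  simp only [m00P, m01P, m10P, m11P, alphaP, betaP, gammaP]; ring

lemma m11_eq (a : QState3) : m11P a = betaP a - m00P a := by
  simp only [m00P, m11P, betaP]; ring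

lemma recov1 (a : QState3) : alphaP a * a 1 0 0 = a 0 0 0 * m00P a + a 0 0 1 * m10P a := by
  simp only [alphaP, m00P, m10P]; ring
lemma recov2 (a : QState3) : alphaP a * a 1 0 1 = a 0 0 0 * m01P a + a 0 0 1 * m11P a := by
  simp only [alphaP, m01P, m11P]; ring
lemma recov3 (a : QState3) : alphaP a * a 1 1 0 = a 0 1 0 * m00P a + a 0 1 1 * m10P a := by
  simp only [alphaP, m00P, m10P]; ring
lemma recov4 (a : QState3) : alphaP a * a 1 1 1 = a 0 1 0 * m01P a + a 0 1 1 * m11P a := by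
  simp only [alphaP, m01P, m11P]; ring

lemma step1 {a : QState3} (hq : quarticQ3 a = 0) (hT : Tq a ≠ 0) :
    ∃ b : QState3, SloccEq a b ∧ alphaP b ≠ 0 := by
  by_cases hα : alphaP a = 0
  · by_cases hγ : gammaP a = 0
    · exfalso
      have h2 : -2*((betaP a)^2 - 4*alphaP a*gammaP a) = 0 := by
        rw [← quartic_factor a]; exact hq
      have hb2 : betaP a ^ 2 = 0 := by
        linear_combination (-1/2 : ℂ) * h2 + (4*gammaP a) * hα
      have hβ : betaP a = 0 := pow_eq_zero_iff (two_ne_zero) |>.mp hb2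
      exact hT (Tq_eq_zero_of_pencil a hα hβ hγ)
    · refine ⟨sloccAct (mkSL !![0,1;-1,0] (by norm_num [Matrix.det_fin_two_of])) 1 1 a,
        ⟨_, _, _, rfl⟩, ?_⟩
      have h : alphaP (sloccAct (mkSL !![0,1;-1,0]
          (by norm_num [Matrix.det_fin_two_of])) 1 1 a) = gammaP a := by
        simp [alphaP, gammaP, sloccAct, Fin.sum_univ_two, Matrix.one_apply]
      rw [h]; exact hγ
  · exact ⟨a, SloccEq.refl a, hα⟩

set_option maxHeartbeats 1000000 in
lemma step2 {b : QState3} (hα : alphaP b ≠ 0) (hq : quarticQ3 b = 0) :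
    ∃ c : QState3, SloccEq b c ∧ alphaP c ≠ 0 ∧ betaP c = 0 ∧ gammaP c = 0 := by
  set t : ℂ := -betaP b / (2 * alphaP b) with ht_def
  have ht : 2 * alphaP b * t = -betaP b := by
    rw [ht_def]; field_simp; try ring
  have hq2 : betaP b ^ 2 - 4 * alphaP b * gammaP b = 0 := by
    have h2 : -2*((betaP b)^2 - 4*alphaP b*gammaP b) = 0 := by
      rw [← quartic_factor b]; exact hq
    linear_combination (-1/2 : ℂ) * h2
  simp only [alphaP, betaP, gammaP] at ht hq2
  set c := sloccAct (mkSL !![1,0;t,1] (by norm_num [Matrix.det_fin_two_of])) 1 1 b with hc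
  have hαc : alphaP c = alphaP b := by
    simp [hc, alphaP, sloccAct, Fin.sum_univ_two, Matrix.one_apply]
  have hβc : betaP c = 0 := by
    simp [hc, betaP, sloccAct, Fin.sum_univ_two, Matrix.one_apply]
    linear_combination (1) * ht
  have hγc : gammaP c = 0 := by
    have h : alphaP b * gammaP c = 0 := by
      simp only [hc, gammaP, alphaP, sloccAct, Fin.sum_univ_two, Matrix.one_apply, mkSL_coe]
      simp [Fin.sum_univ_two, -mul_eq_zero]
      linear_combination ((1/2 : ℂ) * (b 0 0 0) * (b 0 1 1) * (t) + (1/4 : ℂ) * (b 0 0 0) * (b 1 1 1) - (1/2 : ℂ) * (b 0 0 1) * (b 0 1 0) * (t) - (1/4 : ℂ) * (b 0 0 1) * (b 1 1 0) - (1/4 : ℂ) * (b 0 1 0) * (b 1 0 1) + (1/4 : ℂ) * (b 0 1 1) * (b 1 0 0)) * ht + (-(1/4 : ℂ)) * hq2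
    rcases mul_eq_zero.mp h with h' | h'
    · exact absurd h' hα
    · exact h'
  exact ⟨c, ⟨_, _, _, hc.symm⟩, hαc ▸ hα, hβc, hγc⟩

set_option maxHeartbeats 2000000 in
lemma step3 {c : QState3} (hα : alphaP c ≠ 0) (hβ : betaP c = 0) (hγ : gammaP c = 0)
    (hT : Tq c ≠ 0) :
    ∃ (d : QState3) (lam : ℂ), SloccEq c d ∧ lam ≠ 0 ∧ alphaP d ≠ 0 ∧
      m00P d = 0 ∧ m10P d = 0 ∧ m11P d = 0 ∧ m01P d = lam := by
  have hA1 : ¬ (∀ j k, c 1 j k = 0) := by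
    intro h
    apply hT
    funext i j k
    fin_cases i <;> fin_cases j <;> fin_cases k <;>
      simp [Tq, h 0 0, h 0 1, h 1 0, h 1 1]
  by_cases hm10 : m10P c = 0
  · have hsq : m00P c ^ 2 = 0 := by
      rw [m00_sq, hβ, hγ, hm10]; ring
    have h00 : m00P c = 0 := pow_eq_zero_iff (two_ne_zero) |>.mp hsq
    have h11 : m11P c = 0 := by rw [m11_eq, hβ, h00]; ring
    refine ⟨c, m01P c, SloccEq.refl c, ?_, hα, h00, hm10, h11, rfl⟩
    intro h01
    apply hA1
    have e1 : c 1 0 0 = 0 := ((mul_eq_zero.mp (show alphaP c * c 1 0 0 = 0 by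
      linear_combination recov1 c + (c 0 0 0) * h00 + (c 0 0 1) * hm10)).resolve_left hα)
    have e2 : c 1 0 1 = 0 := ((mul_eq_zero.mp (show alphaP c * c 1 0 1 = 0 by
      linear_combination recov2 c + (c 0 0 0) * h01 + (c 0 0 1) * h11)).resolve_left hα)
    have e3 : c 1 1 0 = 0 := ((mul_eq_zero.mp (show alphaP c * c 1 1 0 = 0 by
      linear_combination recov3 c + (c 0 1 0) * h00 + (c 0 1 1) * hm10)).resolve_left hα)
    have e4 : c 1 1 1 = 0 := ((mul_eq_zero.mp (show alphaP c * c 1 1 1 = 0 by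
      linear_combination recov4 c + (c 0 1 0) * h01 + (c 0 1 1) * h11)).resolve_left hα)
    intro j k
    fin_cases j <;> fin_cases k
    exacts [e1, e2, e3, e4]
  · obtain ⟨s, hs0⟩ := IsAlgClosed.exists_pow_nat_eq (-(m10P c)⁻¹) (by norm_num : 0 < 2)
    have hs : s ^ 2 * m10P c = -1 := by
      rw [hs0]; field_simp
    have hdet3 : (!![s * m00P c, s * m10P c; s, 0] : Matrix (Fin 2) (Fin 2) ℂ).det = 1 := by
      rw [Matrix.det_fin_two_of]; linear_combination -hs
    set g₃ := mkSL !![s * m00P c, s * m10P c; s, 0] hdet3 with hg3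
    set d := sloccAct 1 1 g₃ c with hd
    have hs' : s ^ 2 * (c 0 0 0 * c 1 1 0 - c 0 1 0 * c 1 0 0) = -1 := by
      rw [← hs]; simp only [m10P]; try ring
    have hβ' : c 0 0 0 * c 1 1 1 + c 0 1 1 * c 1 0 0 - c 0 0 1 * c 1 1 0 - c 0 1 0 * c 1 0 1
        = 0 := by rw [← hβ]; simp only [betaP]; try ring
    have hγ' : c 1 0 0 * c 1 1 1 - c 1 0 1 * c 1 1 0 = 0 := by
      rw [← hγ]; simp only [gammaP]; try ring
    have hαd : alphaP d = alphaP c := by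
      simp only [hd, hg3, alphaP, m00P, m10P, sloccAct, Fin.sum_univ_two, Matrix.one_apply,
        mkSL_coe]
      simp [Fin.sum_univ_two]
      linear_combination (-(c 0 0 0) * (c 0 1 1) + (c 0 0 1) * (c 0 1 0)) * hs'
    have h00d : m00P d = 0 := by
      simp only [hd, hg3, m00P, m10P, sloccAct, Fin.sum_univ_two, Matrix.one_apply, mkSL_coe]
      simp [Fin.sum_univ_two]
      linear_combination (-(c 0 0 0) * (c 1 1 1) + (c 0 0 1) * (c 1 1 0) + (c 0 1 0) * (c 1 0 1) - (c 0 1 1) * (c 1 0 0)) * hs' + (1) * hβ'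
    have h10d : m10P d = 0 := by
      simp only [hd, hg3, m00P, m10P, sloccAct, Fin.sum_univ_two, Matrix.one_apply, mkSL_coe]
      simp [Fin.sum_univ_two]
      linear_combination ((c 0 0 0) * (c 0 1 1) * (c 1 0 0) * (c 1 1 1) - (c 0 0 0) * (c 0 1 1) * (c 1 0 1) * (c 1 1 0) - (c 0 0 1) * (c 0 1 0) * (c 1 0 0) * (c 1 1 1) + (c 0 0 1) * (c 0 1 0) * (c 1 0 1) * (c 1 1 0)) * hs' + (-(c 0 0 0) * (c 0 1 1) + (c 0 0 1) * (c 0 1 0)) * hγ'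
    have h11d : m11P d = 0 := by
      simp only [hd, hg3, m00P, m10P, m11P, sloccAct, Fin.sum_univ_two, Matrix.one_apply,
        mkSL_coe]
      simp [Fin.sum_univ_two]
      try ring
    have h01d : m01P d = 1 := by
      simp only [hd, hg3, m00P, m01P, m10P, sloccAct, Fin.sum_univ_two, Matrix.one_apply,
        mkSL_coe]
      simp [Fin.sum_univ_two]
      linear_combination (-1) * hs'
    exact ⟨d, 1, ⟨_, _, _, hd.symm⟩, one_ne_zero, hαd ▸ hα, h00d, h10d, h11d, h01d⟩

set_option maxHeartbeats 2000000 in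
lemma step4 {d : QState3} (hα : alphaP d ≠ 0) {lam : ℂ} (hlam : lam ≠ 0)
    (h00 : m00P d = 0) (h10 : m10P d = 0) (h11 : m11P d = 0) (h01 : m01P d = lam) :
    ∃ (e : QState3) (C R : ℂ), SloccEq d e ∧ C ≠ 0 ∧ R ≠ 0 ∧
      e 0 0 0 = 0 ∧ e 0 0 1 = C ∧ e 0 1 0 = C ∧ e 0 1 1 = 0 ∧
      e 1 0 0 = 0 ∧ e 1 0 1 = 0 ∧ e 1 1 0 = 0 ∧ e 1 1 1 = R := by
  obtain ⟨cc, hcc⟩ := IsAlgClosed.exists_pow_nat_eq (-(alphaP d)) (by norm_num : 0 < 2)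
  have hcc0 : cc ≠ 0 := by
    intro h
    apply hα
    rw [h] at hcc
    linear_combination hcc
  have hv : cc * cc⁻¹ = 1 := mul_inv_cancel₀ hcc0
  have hcc2 : cc ^ 2 + (d 0 0 0 * d 0 1 1 - d 0 0 1 * d 0 1 0) = 0 := by
    rw [hcc]; simp only [alphaP]; ring
  have h00e : d 0 1 1 * d 1 0 0 - d 0 0 1 * d 1 1 0 = 0 := by rw [← h00]; simp only [m00P]; try ring
  have h10e : d 0 0 0 * d 1 1 0 - d 0 1 0 * d 1 0 0 = 0 := by rw [← h10]; simp only [m10P]; try ring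
  have h11e : d 0 0 0 * d 1 1 1 - d 0 1 0 * d 1 0 1 = 0 := by rw [← h11]; simp only [m11P]; try ring
  have h01e : d 0 1 1 * d 1 0 1 - d 0 0 1 * d 1 1 1 = lam := by rw [← h01]; simp only [m01P]; try ring
  have hdet2 : (!![cc⁻¹ * -(d 0 1 0), cc⁻¹ * d 0 0 0;
      cc⁻¹ * d 0 1 1, cc⁻¹ * -(d 0 0 1)] : Matrix (Fin 2) (Fin 2) ℂ).det = 1 := by
    rw [Matrix.det_fin_two_of]
    linear_combination ((cc) * (cc⁻¹) + 1) * hv + (-(cc⁻¹) * (cc⁻¹)) * hcc2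
  set g₂ := mkSL !![cc⁻¹ * -(d 0 1 0), cc⁻¹ * d 0 0 0;
      cc⁻¹ * d 0 1 1, cc⁻¹ * -(d 0 0 1)] hdet2 with hg2
  set e := sloccAct 1 g₂ 1 d with he
  refine ⟨e, -cc, lam * cc⁻¹, ⟨_, _, _, he.symm⟩, neg_ne_zero.mpr hcc0,
    mul_ne_zero hlam (inv_ne_zero hcc0), ?_, ?_, ?_, ?_, ?_, ?_, ?_, ?_⟩ <;>
    simp only [he, hg2, sloccAct, Fin.sum_univ_two, Matrix.one_apply, mkSL_coe] <;>
    simp [Fin.sum_univ_two]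
  · ring
  · linear_combination (-(cc)) * hv + ((cc⁻¹)) * hcc2
  · linear_combination (-(cc)) * hv + ((cc⁻¹)) * hcc2
  · ring
  · linear_combination ((cc⁻¹)) * h10e
  · linear_combination ((cc⁻¹)) * h11e
  · linear_combination ((cc⁻¹)) * h00e
  · linear_combination ((cc⁻¹)) * h01e

set_option maxHeartbeats 1000000 in
lemma step5 {e : QState3} {C R : ℂ} (hC : C ≠ 0) (hR : R ≠ 0)
    (h000 : e 0 0 0 = 0) (h001 : e 0 0 1 = C) (h010 : e 0 1 0 = C) (h011 : e 0 1 1 = 0)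
    (h100 : e 1 0 0 = 0) (h101 : e 1 0 1 = 0) (h110 : e 1 1 0 = 0) (h111 : e 1 1 1 = R) :
    SloccEq e (fun i j k =>
      if (i, j, k) = (1, 1, 1) ∨ (i, j, k) = (0, 0, 1) ∨ (i, j, k) = (0, 1, 0) then 1
      else 0) := by
  obtain ⟨w, hw⟩ := IsAlgClosed.exists_pow_nat_eq (C * R) (by norm_num : 0 < 2)
  have hw0 : w ≠ 0 := by
    intro h
    rw [h] at hw
    exact (mul_ne_zero hC hR) (by linear_combination -hw)
  refine ⟨mkSL !![C⁻¹, 0; 0, C] (by rw [Matrix.det_fin_two_of]; field_simp; simp),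
          mkSL !![w, 0; 0, w⁻¹] (by rw [Matrix.det_fin_two_of]; field_simp; simp),
          mkSL !![w, 0; 0, w⁻¹] (by rw [Matrix.det_fin_two_of]; field_simp; simp), ?_⟩
  funext i j k
  fin_cases i <;> fin_cases j <;> fin_cases k
  · simp [sloccAct, Fin.sum_univ_two, Prod.ext_iff, h000]
  · simp [sloccAct, Fin.sum_univ_two, Prod.ext_iff, h001]
    field_simp
    try ring
  · simp [sloccAct, Fin.sum_univ_two, Prod.ext_iff, h010]
    field_simp
    try ring
  · simp [sloccAct, Fin.sum_univ_two, Prod.ext_iff, h011]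
  · simp [sloccAct, Fin.sum_univ_two, Prod.ext_iff, h100]
  · simp [sloccAct, Fin.sum_univ_two, Prod.ext_iff, h101]
  · simp [sloccAct, Fin.sum_univ_two, Prod.ext_iff, h110]
  · simp [sloccAct, Fin.sum_univ_two, Prod.ext_iff, h111]
    field_simp
    try linear_combination hw
    try linear_combination -hw

/-- A rank-3 state (`q(a) = 0` but `T(a,a,a) ≠ 0`, i.e. the derivative of `q` at `a` is
nonzero) is SLOCC-equivalent to the W-class representative `|111⟩ + |001⟩ + |010⟩`. -/
theorem rank3_W_class :
    ∀ a : QState3, quarticQ3 a = 0 → fderiv ℂ quarticQ3 a ≠ 0 →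
      ∃ g₁ g₂ g₃ : Matrix.SpecialLinearGroup (Fin 2) ℂ,
        sloccAct g₁ g₂ g₃ a = fun i j k =>
          if (i, j, k) = (1, 1, 1) ∨ (i, j, k) = (0, 0, 1) ∨ (i, j, k) = (0, 1, 0) then 1
          else 0 := by
  intro a hq hD
  have hT : Tq a ≠ 0 := Tq_ne_zero_of_fderiv a hD
  obtain ⟨b, hab, hbα⟩ := step1 hq hT
  have hbq : quarticQ3 b = 0 := hab.quartic.trans hq
  have hbT : Tq b ≠ 0 := hab.tq_ne hT
  obtain ⟨c, hbc, hcα, hcβ, hcγ⟩ := step2 hbα hbq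
  have hcT : Tq c ≠ 0 := hbc.tq_ne hbT
  obtain ⟨d, lam, hcd, hlam, hdα, h00, h10, h11, h01⟩ := step3 hcα hcβ hcγ hcT
  obtain ⟨e, C, R, hde, hC, hR, h000, h001, h010, h011, h100, h101, h110, h111⟩ :=
    step4 hdα hlam h00 h10 h11 h01
  have hfin := step5 hC hR h000 h001 h010 h011 h100 h101 h110 h111
  exact (((hab.trans hbc).trans hcd).trans hde).trans hfin
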